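/- arXiv:1707.00567 — 2 statements merged into one kernel-verified Lean document; each statement's English description precedes it below -/
import Mathlib

section
/- Let n_s, n_b, n be real numbers with 1 < n_s ≤ n ≤ n_b, and set α = 1/(n − 1). Then for all real numbers f and y: α·f² + 2·α·f·y + (1 + α)·y² ≥ (1/(n_b − 1))·(1 − 1/√(n_s))·(f² + y²). -/
/-!
Write `s = √n_s`, so `s ^ 2 ≤ n`. Completing the square with weight `s`,
`α f² + 2α f y + (1 + α) y² = α (1 - 1/s) f² + (1 + α - α s) y² + (α / s) (f + s y)²`,
so it suffices that both diagonal coefficients dominate `c = (1 - 1/s) / (n_b - 1)`.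
The first does because `α ≥ 1 / (n_b - 1)`; for the second, `n - 1 ≥ (s - 1)(s + 1)` gives
`1 + α - α s ≥ s / (s + 1) ≥ 1 / (s (s + 1)) ≥ c`.
-/

lemma weighted_sq_le {a t : ℝ} (b : ℝ) (ha : 0 ≤ a) (ht : 0 < t) (f y : ℝ) :
    a * (1 - 1 / t) * f ^ 2 + (b - a * t) * y ^ 2 ≤ a * f ^ 2 + 2 * a * f * y + b * y ^ 2 := by
  have hsq : 0 ≤ a / t * (f + t * y) ^ 2 := by positivity
  have hdecomp : a * f ^ 2 + 2 * a * f * y + b * y ^ 2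
      = a * (1 - 1 / t) * f ^ 2 + (b - a * t) * y ^ 2 + a / t * (f + t * y) ^ 2 := by
    field_simp
    ring
  linarith

lemma mul_sq_add_sq_le {c p q : ℝ} (hp : c ≤ p) (hq : c ≤ q) (f y : ℝ) :
    c * (f ^ 2 + y ^ 2) ≤ p * f ^ 2 + q * y ^ 2 := by
  nlinarith [mul_le_mul_of_nonneg_right hp (sq_nonneg f),
    mul_le_mul_of_nonneg_right hq (sq_nonneg y)]

section

variable {s n nb : ℝ}

lemma one_div_sub_one_mul_le (hs : 1 ≤ s) (hn : 1 < n) (hnb : n ≤ nb) :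
    1 / (nb - 1) * (1 - 1 / s) ≤ 1 / (n - 1) * (1 - 1 / s) := by
  have hn1 : 0 < n - 1 := by linarith
  gcongr
  exact sub_nonneg.mpr ((div_le_one (by linarith)).mpr hs)

lemma one_div_sub_one_mul_le_one_add (hs : 1 < s) (hn : s ^ 2 ≤ n) (hnb : n ≤ nb) :
    1 / (nb - 1) * (1 - 1 / s) ≤ 1 + 1 / (n - 1) - 1 / (n - 1) * s := by
  have hs0 : 0 < s := by linarith
  have hs1 : s - 1 ≠ 0 := by linarith
  have hn1 : (s - 1) * (s + 1) ≤ n - 1 := by nlinarith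
  have hfactor : 0 < (s - 1) * (s + 1) := by nlinarith
  calc 1 / (nb - 1) * (1 - 1 / s) = (s - 1) / (s * (nb - 1)) := by
        field_simp
    _ ≤ (s - 1) / (s * ((s - 1) * (s + 1))) := by gcongr; linarith
    _ = 1 / (s * (s + 1)) := by field_simp
    _ ≤ s / (s + 1) := by
        rw [div_le_div_iff₀ (by positivity) (by positivity)]
        nlinarith
    _ = 1 - (s - 1) / ((s - 1) * (s + 1)) := by field_simp; ring
    _ ≤ 1 - (s - 1) / (n - 1) := by gcongr
    _ = 1 + 1 / (n - 1) - 1 / (n - 1) * s := by ring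

end

/-- Coercivity estimate for the coefficient `α = 1/(n-1)` when `1 < n_s ≤ n ≤ n_b`. -/
theorem coercivity_alpha (ns nb n : ℝ) (hns : 1 < ns) (hsn : ns ≤ n) (hnb : n ≤ nb)
    (α : ℝ) (hα : α = 1 / (n - 1)) (f y : ℝ) :
    α * f ^ 2 + 2 * α * f * y + (1 + α) * y ^ 2
      ≥ (1 / (nb - 1)) * (1 - 1 / Real.sqrt ns) * (f ^ 2 + y ^ 2) := by
  set s := Real.sqrt ns
  have hs : 1 < s := Real.lt_sqrt_of_sq_lt (by linarith)
  have hsn' : s ^ 2 ≤ n := by rwa [Real.sq_sqrt (by linarith)]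
  subst hα
  have hα0 : 0 ≤ 1 / (n - 1) := one_div_nonneg.mpr (by linarith)
  calc 1 / (nb - 1) * (1 - 1 / s) * (f ^ 2 + y ^ 2)
      ≤ 1 / (n - 1) * (1 - 1 / s) * f ^ 2 + (1 + 1 / (n - 1) - 1 / (n - 1) * s) * y ^ 2 :=
        mul_sq_add_sq_le (one_div_sub_one_mul_le hs.le (by linarith) hnb)
          (one_div_sub_one_mul_le_one_add hs hsn' hnb) f y
    _ ≤ _ := weighted_sq_le _ hα0 (by linarith) f y
end

section
/- Let (Ω, μ) be a measure space and let n : Ω → ℝ be a measurable function with 1 < n_s ≤ n(x) ≤ n_b for μ-almost every x, where n_s, n_b are real constants. Set α(x) = 1/(n(x) − 1). Then for all real-valued functions f, y ∈ L²(μ): ∫ α·f² dμ + 2·∫ α·f·y dμ + ∫ (1 + α)·y² dμ ≥ (1/(n_b − 1))·(1 − √(1/n_s))·(‖f‖²_{L²} + ‖y‖²_{L²}). -/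
open MeasureTheory

/-!
Pointwise, with `a = α(x)` and `s = √n_s`, complete the square in the cross term:
`a f² + 2afy + (1+a)y² = a(1 - 1/s) f² + (1 - a(s-1)) y² + a s (f/s + y)²`.
Since `a (s² - 1) ≤ 1`, the coefficient of `y²` dominates that of `f²`, so the form is at least
`a (1 - 1/s)(f² + y²) ≥ (1/(n_b - 1))(1 - 1/s)(f² + y²)`; integrate.
-/

lemma quadratic_form_lower_bound {a s f y : ℝ} (ha : 0 ≤ a) (hs : 1 ≤ s)
    (has : a * (s ^ 2 - 1) ≤ 1) :
    a * (1 - s⁻¹) * (f ^ 2 + y ^ 2) ≤ a * f ^ 2 + 2 * (a * f * y) + (1 + a) * y ^ 2 := by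
  have hs0 : 0 < s := by linarith
  have hcoef : a * (1 - s⁻¹) ≤ 1 - a * (s - 1) := by
    have : a * (s - s⁻¹) ≤ 1 := by
      rw [show a * (s - s⁻¹) = a * (s ^ 2 - 1) / s by field_simp]
      exact div_le_one_of_le₀ (has.trans hs) hs0.le
    linarith
  have hsquare : 0 ≤ a * s * (s⁻¹ * f + y) ^ 2 := by positivity
  have hid : a * f ^ 2 + 2 * (a * f * y) + (1 + a) * y ^ 2
      = a * (1 - s⁻¹) * f ^ 2 + (1 - a * (s - 1)) * y ^ 2 + a * s * (s⁻¹ * f + y) ^ 2 := by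
    field_simp
    ring
  rw [hid]
  linarith [mul_le_mul_of_nonneg_right hcoef (sq_nonneg y),
    mul_add (a * (1 - s⁻¹)) (f ^ 2) (y ^ 2)]

lemma quadratic_form_one_div_sub_one_lower_bound {m ns nb f y : ℝ} (hns : 1 < ns)
    (hm : ns ≤ m) (hmb : m ≤ nb) :
    1 / (nb - 1) * (1 - √(1 / ns)) * (f ^ 2 + y ^ 2)
      ≤ 1 / (m - 1) * f ^ 2 + 2 * (1 / (m - 1) * f * y) + (1 + 1 / (m - 1)) * y ^ 2 := by
  have hm1 : 0 < m - 1 := by linarith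
  have hs : 1 ≤ √ns := Real.one_le_sqrt.mpr hns.le
  rw [one_div ns, Real.sqrt_inv]
  have h1s : 0 ≤ 1 - (√ns)⁻¹ := sub_nonneg.mpr (inv_le_one_of_one_le₀ hs)
  calc 1 / (nb - 1) * (1 - (√ns)⁻¹) * (f ^ 2 + y ^ 2)
      ≤ 1 / (m - 1) * (1 - (√ns)⁻¹) * (f ^ 2 + y ^ 2) := by
        gcongr
    _ ≤ _ := by
        refine quadratic_form_lower_bound (by positivity) hs ?_
        rw [Real.sq_sqrt (by linarith), one_div_mul_eq_div]
        exact div_le_one_of_le₀ (by linarith) hm1.le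

lemma toReal_eLpNorm_two_sq {Ω : Type*} [MeasurableSpace Ω] {μ : Measure Ω}
    {f : Ω → ℝ} (hf : MemLp f 2 μ) :
    (eLpNorm f 2 μ).toReal ^ 2 = ∫ x, f x ^ 2 ∂μ := by
  rw [← Lp.norm_toLp f hf, ← real_inner_self_eq_norm_sq, L2.inner_def]
  refine integral_congr_ae ?_
  filter_upwards [hf.coeFn_toLp] with x hx
  simp [hx, sq]

/-- Coercivity estimate in `L²(μ)` for the coefficient `α(x) = 1/(n(x)-1)` when
`1 < n_s ≤ n(x) ≤ n_b` almost everywhere. -/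
theorem coercivity_alpha_L2 {Ω : Type*} [MeasurableSpace Ω] (μ : Measure Ω)
    (n : Ω → ℝ) (hn : Measurable n) (ns nb : ℝ) (hns : 1 < ns)
    (hbound : ∀ᵐ x ∂μ, ns ≤ n x ∧ n x ≤ nb)
    (α : Ω → ℝ) (hα : ∀ x, α x = 1 / (n x - 1))
    (f y : Ω → ℝ) (hf : MemLp f 2 μ) (hy : MemLp y 2 μ) :
    (∫ x, α x * f x ^ 2 ∂μ) + 2 * (∫ x, α x * f x * y x ∂μ)
        + (∫ x, (1 + α x) * y x ^ 2 ∂μ)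
      ≥ (1 / (nb - 1)) * (1 - Real.sqrt (1 / ns)) *
          ((eLpNorm f 2 μ).toReal ^ 2 + (eLpNorm y 2 μ).toReal ^ 2) := by
  have hαm : AEStronglyMeasurable α μ := by
    rw [funext hα]
    exact (measurable_const.div (hn.sub measurable_const)).aestronglyMeasurable
  have hαC : ∀ᵐ x ∂μ, ‖α x‖ ≤ 1 / (ns - 1) := hbound.mono fun x ⟨hx, _⟩ ↦ by
    rw [hα, Real.norm_of_nonneg (by have := hns.trans_le hx; positivity)]
    gcongr
  have hαf : Integrable (fun x ↦ α x * f x ^ 2) μ := hf.integrable_sq.bdd_mul hαm hαC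
  have hαfy : Integrable (fun x ↦ 2 * (α x * f x * y x)) μ := by
    simpa only [Pi.mul_apply, mul_assoc] using
      ((hf.integrable_mul hy).bdd_mul hαm hαC).const_mul 2
  have hαy : Integrable (fun x ↦ (1 + α x) * y x ^ 2) μ := by
    simpa only [add_mul, one_mul] using
      hy.integrable_sq.fun_add (hy.integrable_sq.bdd_mul hαm hαC)
  calc (1 / (nb - 1)) * (1 - √(1 / ns))
        * ((eLpNorm f 2 μ).toReal ^ 2 + (eLpNorm y 2 μ).toReal ^ 2)
      = ∫ x, 1 / (nb - 1) * (1 - √(1 / ns)) * (f x ^ 2 + y x ^ 2) ∂μ := by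
        rw [integral_const_mul, integral_add hf.integrable_sq hy.integrable_sq,
          toReal_eLpNorm_two_sq hf, toReal_eLpNorm_two_sq hy]
    _ ≤ ∫ x, α x * f x ^ 2 + 2 * (α x * f x * y x) + (1 + α x) * y x ^ 2 ∂μ :=
        integral_mono_ae ((hf.integrable_sq.add hy.integrable_sq).const_mul _)
          ((hαf.fun_add hαfy).fun_add hαy)
          (hbound.mono fun x ⟨hx, hxb⟩ ↦ by
            simpa only [hα] using quadratic_form_one_div_sub_one_lower_bound hns hx hxb)
    _ = _ := by
        rw [integral_add (hαf.fun_add hαfy) hαy, integral_add hαf hαfy, integral_const_mul]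
end
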